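/- arXiv:1811.08090 — 2 statements merged into one kernel-verified Lean document; each statement's English description precedes it below -/
import Mathlib

section
/- Let π in S_n and let i < j with π(i) < π(j). If no index k with i < k < j satisfies π(i) < π(k) < π(j), then inv(π * (i,j)) = inv(π) + 1. -/
/-!
Reindexing pairs through `σ` shows that the inversions of `π σ⁻¹` are, up to reversing a pair,
the pairs inverted by exactly one of `π` and `σ`; hence
`inv (π σ⁻¹) = #(Inv π \ Inv σ) + #(Inv σ \ Inv π)`.
For `σ = (i j)` the inversions of `σ` are `(i, j)` and the pairs `(i, k)`, `(k, j)` with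
`i < k < j`. The involution `(c, d) ↦ (σ d, σ c)` exchanges `(i, k)` and `(k, j)`, and when no
`π k` lies strictly between `π i < π j` it exchanges the pairs of `Inv σ \ {(i, j)}` inverted by `π`
with those not inverted by `π`. So `#(Inv σ \ Inv π) = #(Inv σ ∩ Inv π) + 1`.
-/

/-- The number of inversions of a permutation of `Fin n`. -/
def invNum {n : ℕ} (π : Equiv.Perm (Fin n)) : ℕ :=
  (Finset.univ.filter fun p : Fin n × Fin n => p.1 < p.2 ∧ π p.2 < π p.1).card

open Finset Equiv

section LinearOrder

variable {α : Type*} [LinearOrder α]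

theorem left_eq_or_right_eq_of_swap_apply_lt_swap_apply {i j c d : α} (hij : i < j)
    (hcd : c < d) (h : swap i j d < swap i j c) : (c = i ∧ d ≤ j) ∨ (i ≤ c ∧ d = j) := by
  rw [swap_apply_def, swap_apply_def] at h
  split_ifs at h <;> grind

variable [Fintype α]

def inversions (σ : Perm α) : Finset (α × α) :=
  univ.filter fun p => p.1 < p.2 ∧ σ p.2 < σ p.1

@[simp] theorem mem_inversions {σ : Perm α} {p : α × α} :
    p ∈ inversions σ ↔ p.1 < p.2 ∧ σ p.2 < σ p.1 := by
  simp [inversions]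

theorem card_inversions_mul_inv (π σ : Perm α) :
    #(inversions (π * σ⁻¹)) =
      #(inversions π \ inversions σ) + #(inversions σ \ inversions π) := by
  set E := univ.filter fun p : α × α => σ p.1 < σ p.2 ∧ π p.2 < π p.1
  have hE : #(inversions (π * σ⁻¹)) = #E :=
    card_equiv (σ⁻¹.prodCongr σ⁻¹) fun p => by simp [E]
  have hlt : E.filter (fun p => p.1 < p.2) = inversions π \ inversions σ := by
    ext ⟨c, d⟩
    simp only [E, mem_filter, mem_univ, true_and, mem_sdiff, mem_inversions]
    have := σ.injective.eq_iff (a := c) (b := d)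
    grind
  have hnot_lt : #(E.filter fun p => ¬p.1 < p.2) = #(inversions σ \ inversions π) :=
    card_equiv (prodComm α α) fun ⟨c, d⟩ => by
      simp only [E, mem_filter, mem_univ, true_and, mem_sdiff, mem_inversions, prodComm_apply,
        Prod.fst_swap, Prod.snd_swap]
      have := π.injective.eq_iff (a := c) (b := d)
      grind
  rw [hE, ← card_filter_add_card_filter_not (fun p => p.1 < p.2), hlt, hnot_lt]

theorem swap_mem_inversions_iff_of_no_middle (π : Perm α) {i j : α}
    (hij : i < j) (hval : π i < π j) (hmid : ∀ k, i < k → k < j → ¬(π i < π k ∧ π k < π j))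
    {p : α × α} (hp : p ∈ inversions (swap i j)) (hne : p ≠ (i, j)) :
    (swap i j p.2, swap i j p.1) ∈ inversions π ↔ p ∉ inversions π := by
  obtain ⟨c, d⟩ := p
  rw [mem_inversions] at hp
  rcases left_eq_or_right_eq_of_swap_apply_lt_swap_apply hij hp.1 hp.2 with
    ⟨rfl, hdj⟩ | ⟨hic, rfl⟩
  · replace hdj : d < j := lt_of_le_of_ne hdj (by grind)
    have hπd : π c < π d ↔ π j < π d :=
      ⟨fun h => lt_of_le_of_ne (not_lt.1 fun h' => hmid d hp.1 hdj ⟨h, h'⟩)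
        (π.injective.ne hdj.ne'), hval.trans⟩
    simp only [mem_inversions, swap_apply_left, swap_apply_of_ne_of_ne hp.1.ne' hdj.ne, hdj, hp.1,
      true_and, ← hπd, not_lt, (π.injective.ne hp.1.ne).le_iff_lt]
  · replace hic : i < c := lt_of_le_of_ne hic (by grind)
    have hπc : π c < π d ↔ π c < π i :=
      ⟨fun h => lt_of_le_of_ne (not_lt.1 fun h' => hmid c hic hp.1 ⟨h', h⟩)
        (π.injective.ne hic.ne'), fun h => h.trans hval⟩
    simp only [mem_inversions, swap_apply_right, swap_apply_of_ne_of_ne hic.ne' hp.1.ne, hic, hp.1,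
      true_and, ← hπc, not_lt, (π.injective.ne hp.1.ne).le_iff_lt]

theorem card_inversions_swap_sdiff_eq_card_inter_add_one (π : Perm α) {i j : α} (hij : i < j)
    (hval : π i < π j) (hmid : ∀ k, i < k → k < j → ¬(π i < π k ∧ π k < π j)) :
    #(inversions (swap i j) \ inversions π) = #(inversions (swap i j) ∩ inversions π) + 1 := by
  have hij_not_mem : (i, j) ∉ inversions π := by simp [hval.le]
  have hij_mem : (i, j) ∈ inversions (swap i j) \ inversions π := by simp [hij, hij_not_mem]
  rw [← card_erase_add_one hij_mem]
  congr 1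
  have hmem_swap : ∀ p ∈ inversions (swap i j),
      (swap i j p.2, swap i j p.1) ∈ inversions (swap i j) := fun p hp => by
    simpa [and_comm] using hp
  have key {p : α × α} := swap_mem_inversions_iff_of_no_middle π hij hval hmid (p := p)
  refine card_nbij' (fun p => (swap i j p.2, swap i j p.1)) (fun p => (swap i j p.2, swap i j p.1))
    ?_ ?_ (fun p _ => by simp) (fun p _ => by simp)
  · intro p hp
    simp only [coe_erase, coe_sdiff, Set.mem_sdiff, Set.mem_singleton_iff, mem_coe] at hp
    simp only [coe_inter, Set.mem_inter_iff, mem_coe]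
    exact ⟨hmem_swap p hp.1.1, (key hp.1.1 hp.2).2 hp.1.2⟩
  · intro p hp
    obtain ⟨hps, hpπ⟩ := mem_inter.1 hp
    have hne : p ≠ (i, j) := by rintro rfl; exact hij_not_mem hpπ
    simp only [coe_erase, coe_sdiff, Set.mem_sdiff, Set.mem_singleton_iff, mem_coe]
    refine ⟨⟨hmem_swap p hps, fun h => (key hps hne).1 h hpπ⟩, fun h => hne ?_⟩
    simpa using congrArg (fun q : α × α => (swap i j q.2, swap i j q.1)) h

end LinearOrder

theorem invNum_mul_swap_of_no_middle {n : ℕ} (π : Equiv.Perm (Fin n)) (i j : Fin n)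
    (hij : i < j) (hval : π i < π j)
    (hmid : ∀ k : Fin n, i < k → k < j → ¬(π i < π k ∧ π k < π j)) :
    invNum (π * Equiv.swap i j) = invNum π + 1 := by
  change #(inversions (π * swap i j)) = #(inversions π) + 1
  rw [← swap_inv, card_inversions_mul_inv,
    card_inversions_swap_sdiff_eq_card_inter_add_one π hij hval hmid, ← add_assoc, inter_comm,
    card_sdiff_add_card_inter]
end

section
/- In the Bruhat order on S_n, every interval [π, γ] of length 2 (i.e., with inv(γ) = inv(π) + 2 and π < γ) contains exactly two elements strictly between π and γ. That is, the Bruhat order is a thin poset. -/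
/-- The cover relations generating the (strong) Bruhat order on `S_n`. -/
def BruhatCov {n : ℕ} (π σ : Equiv.Perm (Fin n)) : Prop :=
  (∃ i j : Fin n, i ≠ j ∧ σ = π * Equiv.swap i j) ∧ invNum σ = invNum π + 1

/-- The strict Bruhat order: the transitive closure of the cover relations. -/
def BruhatLt {n : ℕ} : Equiv.Perm (Fin n) → Equiv.Perm (Fin n) → Prop :=
  Relation.TransGen BruhatCov

/-!
For `i < j` and `π i < π j`, multiplying `π` on the right by the transposition `(i j)` raises the
inversion number by `1 + 2m`, where `m` counts the positions strictly between `i` and `j` whose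
values lie strictly between `π i` and `π j`; so `π ⋖ π (i j)` exactly when this rectangle is empty.

If `π ⋖ π t₁ ⋖ π t₁ t₂`, the elements strictly between are the `π t` with `π ⋖ π t` and `t t₁ t₂`
a transposition. For disjoint `t₁, t₂` these `t` are `t₁` and `t₂`, and the empty rectangle of `t₂`
at `π t₁` is also empty at `π`. Otherwise `t₁ t₂` is a 3-cycle on some `{u, v, w}`, the candidates
are its three transpositions, and comparing rectangles shows that exactly two of them are covers
of `π`: at least one besides `t₁`, and never all three, since covers at consecutive pairs of
positions put the middle value inside the rectangle of the outer pair.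
-/

open Equiv Finset

theorem commute_of_mul_self_eq_one {G : Type*} [Group G] {t g : G} (ht : t * t = 1)
    (hg : g * g = 1) (htg : t * g * (t * g) = 1) : Commute t g := by
  have h := inv_eq_of_mul_eq_one_right htg
  rw [mul_inv_rev, inv_eq_of_mul_eq_one_right ht, inv_eq_of_mul_eq_one_right hg] at h
  exact h.symm

namespace Equiv.Perm
variable {α : Type*} [DecidableEq α]

theorem swap_ne_swap {u v w : α} (huv : u ≠ v) (huw : u ≠ w) : swap u v ≠ swap v w := by
  intro h
  simpa [swap_apply_of_ne_of_ne huv huw, huv.symm] using congr($h u)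

theorem apply_eq_of_commute_swap {g : Perm α} {a b : α} (hab : a ≠ b) (h : Commute (swap a b) g)
    (ha : g a ≠ a) : g a = b := by
  by_contra hb
  have := congr($h a)
  simp only [Perm.mul_apply, swap_apply_left, swap_apply_of_ne_of_ne ha hb] at this
  exact hab (g.injective this)

theorem swap_eq_of_swap_apply_eq {a b c d : α} (hab : a ≠ b) (h : swap c d a = b) :
    swap c d = swap a b := by
  rw [swap_apply_def] at h
  split_ifs at h with hac had
  · rw [hac, h]
  · rw [had, h, swap_comm]
  · exact absurd h hab

theorem apply_ne_of_isSwap_swap_mul {g : Perm α} {a b : α} (hab : a ≠ b) (hg : g ≠ 1)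
    (h : (swap a b * g).IsSwap) : g a ≠ a := by
  obtain ⟨c, d, -, hcd⟩ := h
  intro hga
  have : swap c d = swap a b :=
    swap_eq_of_swap_apply_eq hab (by rw [← hcd, Perm.mul_apply, hga, swap_apply_left])
  rw [this] at hcd
  exact hg (by simpa using congr(swap a b * $hcd))

theorem isSwap_and_isSwap_mul_swap_mul_swap_iff {t : Perm α} {u v w : α} (huv : u ≠ v) (hvw : v ≠ w)
    (huw : u ≠ w) :
    t.IsSwap ∧ (t * (swap u v * swap v w)).IsSwap ↔ t = swap u v ∨ t = swap v w ∨ t = swap u w := by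
  have hmoved : ∀ x, (swap u v * swap v w) x ≠ x → x = u ∨ x = v ∨ x = w := by
    intro x hx
    by_contra! h
    simp [swap_apply_of_ne_of_ne, h] at hx
  constructor
  · rintro ⟨⟨a, b, hab, rfl⟩, h⟩
    have hg : swap u v * swap v w ≠ 1 := fun h1 => by
      simpa [swap_apply_of_ne_of_ne huv huw, huv.symm] using congr($h1 u)
    have ha := hmoved a (apply_ne_of_isSwap_swap_mul hab hg h)
    have hb := hmoved b (apply_ne_of_isSwap_swap_mul hab.symm hg (by rwa [swap_comm]))
    rcases ha with rfl | rfl | rfl <;> rcases hb with rfl | rfl | rfl <;> simp_all [swap_comm]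
  · rintro (rfl | rfl | rfl)
    · exact ⟨⟨u, v, huv, rfl⟩, v, w, hvw, by simp⟩
    · exact ⟨⟨v, w, hvw, rfl⟩, w, u, huw.symm, by rw [← mul_assoc, swap_mul_swap_mul_swap huv huw]⟩
    · refine ⟨⟨u, w, huw, rfl⟩, u, v, huv, ?_⟩
      ext x; simp only [Perm.mul_apply, swap_apply_def]; grind

theorem isSwap_and_isSwap_mul_swap_mul_swap_iff_of_disjoint {t : Perm α} {i j k l : α} (hij : i ≠ j)
    (hkl : k ≠ l) (hik : i ≠ k) (hil : i ≠ l) (hjk : j ≠ k) (hjl : j ≠ l) :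
    t.IsSwap ∧ (t * (swap i j * swap k l)).IsSwap ↔ t = swap i j ∨ t = swap k l := by
  have hcomm : Commute (swap i j) (swap k l) := by
    ext x; simp only [Perm.mul_apply, swap_apply_def]; grind
  constructor
  · rintro ⟨⟨a, b, hab, rfl⟩, h⟩
    have hg : swap i j * swap k l ≠ 1 := fun h1 => by
      simpa [swap_apply_of_ne_of_ne hik hil, hij.symm] using congr($h1 i)
    have ha := apply_ne_of_isSwap_swap_mul hab hg h
    obtain ⟨c, d, -, hcd⟩ := h
    -- `swap a b` commutes with the involution `swap i j * swap k l`, so `{a, b}` is an orbit of it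
    have hga := apply_eq_of_commute_swap hab (commute_of_mul_self_eq_one (swap_mul_self a b)
      (by rw [hcomm.symm.mul_mul_mul_comm]; simp) (by rw [hcd, swap_mul_self])) ha
    have hmoved : a = i ∨ a = j ∨ a = k ∨ a = l := by
      by_contra! h
      simp [swap_apply_of_ne_of_ne, h] at ha
    rw [← hga]
    rcases hmoved with rfl | rfl | rfl | rfl
    · simp [swap_apply_of_ne_of_ne hik hil]
    · simp [swap_apply_of_ne_of_ne hjk hjl, swap_comm]
    · simp [swap_apply_of_ne_of_ne hil.symm hjl.symm]
    · simp [swap_apply_of_ne_of_ne hik.symm hjk.symm, swap_comm]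
  · rintro (rfl | rfl)
    · exact ⟨⟨i, j, hij, rfl⟩, k, l, hkl, by simp⟩
    · exact ⟨⟨k, l, hkl, rfl⟩, i, j, hij, by rw [hcomm.eq, swap_mul_self_mul]⟩

end Equiv.Perm

section
variable {n : ℕ}

def rectangle (π : Perm (Fin n)) (i j : Fin n) : Finset (Fin n) :=
  (Ioo i j).filter fun k => π i < π k ∧ π k < π j

def SwapCovers (π : Perm (Fin n)) (i j : Fin n) : Prop :=
  i < j ∧ π i < π j ∧ ∀ k, i < k → k < j → ¬(π i < π k ∧ π k < π j)

theorem invNum_mul_swap_eq_card (π : Perm (Fin n)) (i j : Fin n) :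
    invNum (π * swap i j) =
      #(univ.filter fun p : Fin n × Fin n => swap i j p.1 < swap i j p.2 ∧ π p.2 < π p.1) :=
  card_equiv ((swap i j).prodCongr (swap i j)) fun p => by
    rw [mem_filter, mem_filter]; simp [swap_apply_self]

theorem invNum_mul_swap_add_card (π : Perm (Fin n)) {i j : Fin n} (hij : i < j)
    (hπ : π i < π j) :
    invNum (π * swap i j) + #((Ioo i j).filter fun k => π k < π i) +
        #((Ioo i j).filter fun k => π j < π k) =
      invNum π + 1 + #((Ioo i j).filter fun k => π i < π k) +
        #((Ioo i j).filter fun k => π k < π j) := by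
  set s := swap i j
  set X := univ.filter fun p : Fin n × Fin n => s p.1 < s p.2 ∧ π p.2 < π p.1
  set Y := univ.filter fun p : Fin n × Fin n => p.1 < p.2 ∧ π p.2 < π p.1
  have hsplit : #X + #(Y.filter fun p => ¬ s p.1 < s p.2) =
      #Y + #(X.filter fun p => ¬ p.1 < p.2) := by
    rw [← card_filter_add_card_filter_not (s := X) (p := fun p => p.1 < p.2),
      ← card_filter_add_card_filter_not (s := Y) (p := fun p => s p.1 < s p.2)]
    have : X.filter (fun p => p.1 < p.2) = Y.filter (fun p => s p.1 < s p.2) := by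
      ext; simp only [X, Y, mem_filter, mem_univ, true_and]; tauto
    rw [this]; omega
  have hA : X.filter (fun p => ¬ p.1 < p.2) = insert (j, i)
      (((Ioo i j).filter fun k => π i < π k) ×ˢ {i} ∪
        {j} ×ˢ (Ioo i j).filter fun k => π k < π j) := by
    ext ⟨u, v⟩
    simp only [X, s, mem_filter, mem_insert, mem_union, mem_product,
      mem_singleton, mem_Ioo, Prod.mk.injEq, swap_apply_def]
    grind
  have hB : Y.filter (fun p => ¬ s p.1 < s p.2) =
      {i} ×ˢ ((Ioo i j).filter fun k => π k < π i) ∪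
        ((Ioo i j).filter fun k => π j < π k) ×ˢ {j} := by
    ext ⟨u, v⟩
    simp only [Y, s, mem_filter, mem_union, mem_product, mem_singleton, mem_Ioo, swap_apply_def]
    grind
  rw [hA, card_insert_of_notMem (by simp), card_union_of_disjoint, card_product, card_product]
    at hsplit
  · rw [hB, card_union_of_disjoint, card_product, card_product] at hsplit
    · simp only [card_singleton, mul_one, one_mul] at hsplit
      have hX : invNum (π * s) = #X := invNum_mul_swap_eq_card π i j
      have hY : invNum π = #Y := rfl
      omega
    · simp only [disjoint_left, mem_product, mem_singleton]; grind
  · simp only [disjoint_left, mem_product, mem_singleton]; grind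

theorem invNum_mul_swap_of_lt (π : Perm (Fin n)) {i j : Fin n} (hij : i < j) (hπ : π i < π j) :
    invNum (π * swap i j) = invNum π + 1 + 2 * #(rectangle π i j) := by
  have hlo : #((Ioo i j).filter fun k => π i < π k) =
      #(rectangle π i j) + #((Ioo i j).filter fun k => π j < π k) := by
    rw [← card_filter_add_card_filter_not (p := fun k => π k < π j)]
    congr 2 <;> ext k <;> simp only [rectangle, mem_filter, mem_Ioo] <;> grind [π.injective.eq_iff]
  have hhi : #((Ioo i j).filter fun k => π k < π j) =
      #(rectangle π i j) + #((Ioo i j).filter fun k => π k < π i) := by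
    rw [← card_filter_add_card_filter_not (p := fun k => π i < π k)]
    congr 2 <;> ext k <;> simp only [rectangle, mem_filter, mem_Ioo] <;> grind [π.injective.eq_iff]
  have := invNum_mul_swap_add_card π hij hπ
  omega

theorem invNum_mul_swap_lt_of_gt (π : Perm (Fin n)) {i j : Fin n} (hij : i < j) (hπ : π j < π i) :
    invNum (π * swap i j) < invNum π := by
  have := invNum_mul_swap_of_lt (π * swap i j) hij (by simpa using hπ)
  rw [mul_swap_mul_self] at this
  omega

theorem invNum_mul_swap_eq_succ_iff {π : Perm (Fin n)} {i j : Fin n} (hij : i < j) :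
    invNum (π * swap i j) = invNum π + 1 ↔ SwapCovers π i j := by
  rcases lt_or_gt_of_ne (π.injective.ne hij.ne) with hπ | hπ
  · rw [invNum_mul_swap_of_lt π hij hπ]
    simp [SwapCovers, rectangle, hij, hπ, filter_eq_empty_iff]
  · have := invNum_mul_swap_lt_of_gt π hij hπ
    exact iff_of_false (by omega) fun h => h.2.1.not_gt hπ

theorem invNum_mul_swap_eq_succ_iff_of_ne {π : Perm (Fin n)} {i j : Fin n} (hij : i ≠ j) :
    invNum (π * swap i j) = invNum π + 1 ↔ SwapCovers π i j ∨ SwapCovers π j i := by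
  rcases hij.lt_or_gt with h | h
  · rw [invNum_mul_swap_eq_succ_iff h]
    exact (or_iff_left fun h' => h'.1.not_gt h).symm
  · rw [swap_comm, invNum_mul_swap_eq_succ_iff h]
    exact (or_iff_right fun h' => h'.1.not_gt h).symm

-- One case per relative order of `u, v, w`; in each, the rectangle required empty is covered by
-- the two rectangles that `h₁` and `h₂` make empty.
theorem invNum_mul_swap_eq_succ_or_of_chain {π : Perm (Fin n)} {u v w : Fin n} (huv : u ≠ v)
    (hvw : v ≠ w) (huw : u ≠ w) (h₁ : invNum (π * swap u v) = invNum π + 1)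
    (h₂ : invNum (π * swap u v * swap v w) = invNum (π * swap u v) + 1) :
    invNum (π * swap v w) = invNum π + 1 ∨ invNum (π * swap u w) = invNum π + 1 := by
  rw [invNum_mul_swap_eq_succ_iff_of_ne huv] at h₁
  rw [invNum_mul_swap_eq_succ_iff_of_ne hvw] at h₂ ⊢
  rw [invNum_mul_swap_eq_succ_iff_of_ne huw]
  rcases huv.lt_or_gt with h | h <;> rcases hvw.lt_or_gt with h' | h' <;>
    rcases huw.lt_or_gt with h'' | h'' <;>
    simp only [SwapCovers, Perm.mul_apply, swap_apply_def] at * <;> grind [π.injective.eq_iff]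

theorem invNum_mul_swap_ne_succ {π : Perm (Fin n)} {u v w : Fin n} (huv : u ≠ v) (hvw : v ≠ w)
    (huw : u ≠ w) (h₁ : invNum (π * swap u v) = invNum π + 1)
    (h₂ : invNum (π * swap v w) = invNum π + 1) : invNum (π * swap u w) ≠ invNum π + 1 := by
  rw [invNum_mul_swap_eq_succ_iff_of_ne huv] at h₁
  rw [invNum_mul_swap_eq_succ_iff_of_ne hvw] at h₂
  rw [Ne, invNum_mul_swap_eq_succ_iff_of_ne huw]
  simp only [SwapCovers] at *
  grind [π.injective.eq_iff]

theorem invNum_mul_swap_eq_succ_of_chain_of_disjoint {π : Perm (Fin n)} {i j k l : Fin n}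
    (hij : i ≠ j) (hkl : k ≠ l) (hik : i ≠ k) (hil : i ≠ l) (hjk : j ≠ k) (hjl : j ≠ l)
    (h₁ : invNum (π * swap i j) = invNum π + 1)
    (h₂ : invNum (π * swap i j * swap k l) = invNum (π * swap i j) + 1) :
    invNum (π * swap k l) = invNum π + 1 := by
  rw [invNum_mul_swap_eq_succ_iff_of_ne hij] at h₁
  rw [invNum_mul_swap_eq_succ_iff_of_ne hkl] at h₂ ⊢
  rcases hij.lt_or_gt with h | h <;> rcases hkl.lt_or_gt with h' | h' <;>
    simp only [SwapCovers, Perm.mul_apply, swap_apply_def] at * <;> grind [π.injective.eq_iff]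

theorem BruhatLt.invNum_lt {π σ : Perm (Fin n)} (h : BruhatLt π σ) : invNum π < invNum σ := by
  induction h with
  | single h => exact h.2 ▸ Nat.lt_succ_self _
  | tail _ h ih => exact h.2 ▸ Nat.lt_succ_of_lt ih

theorem BruhatLt.bruhatCov {π σ : Perm (Fin n)} (h : BruhatLt π σ)
    (hσ : invNum σ = invNum π + 1) : BruhatCov π σ := by
  cases h with
  | single h => exact h
  | tail h h' => have := BruhatLt.invNum_lt h; have := h'.2; omega

def bruhatIoo (π γ : Perm (Fin n)) : Set (Perm (Fin n)) :=
  {z | BruhatLt π z ∧ BruhatLt z γ}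

theorem mem_bruhatIoo_iff {π γ z : Perm (Fin n)} (hγ : invNum γ = invNum π + 2) :
    z ∈ bruhatIoo π γ ↔ BruhatCov π z ∧ BruhatCov z γ := by
  refine ⟨fun ⟨h₁, h₂⟩ => ?_, fun ⟨h₁, h₂⟩ => ⟨.single h₁, .single h₂⟩⟩
  have := h₁.invNum_lt
  have := h₂.invNum_lt
  exact ⟨h₁.bruhatCov (by omega), h₂.bruhatCov (by omega)⟩

theorem BruhatLt.exists_bruhatCov_bruhatCov {π γ : Perm (Fin n)} (h : BruhatLt π γ)
    (hγ : invNum γ = invNum π + 2) : ∃ z, BruhatCov π z ∧ BruhatCov z γ := by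
  cases h with
  | single h => have := h.2; omega
  | tail h h' =>
    have := BruhatLt.invNum_lt h
    have := h'.2
    exact ⟨_, BruhatLt.bruhatCov h (by omega), h'⟩

theorem bruhatIoo_eq_image {π g : Perm (Fin n)} (hg : invNum (π * g) = invNum π + 2) :
    bruhatIoo π (π * g) = (π * ·) ''
      {t | t.IsSwap ∧ (t * g).IsSwap ∧ invNum (π * t) = invNum π + 1} := by
  ext z
  rw [mem_bruhatIoo_iff hg]
  constructor
  · rintro ⟨⟨⟨a, b, hab, rfl⟩, h₁⟩, ⟨c, d, hcd, hz⟩, -⟩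
    refine ⟨swap a b, ⟨⟨a, b, hab, rfl⟩, ⟨c, d, hcd, ?_⟩, h₁⟩, rfl⟩
    rw [mul_assoc, mul_right_inj] at hz
    rw [hz, swap_mul_self_mul]
  · rintro ⟨t, ⟨⟨a, b, hab, rfl⟩, ⟨c, d, hcd, ht⟩, h₁⟩, rfl⟩
    dsimp only
    refine ⟨⟨⟨a, b, hab, rfl⟩, h₁⟩, ⟨c, d, hcd, ?_⟩, by omega⟩
    rw [mul_assoc, ← ht, swap_mul_self_mul]

theorem ncard_bruhatIoo {π g : Perm (Fin n)} (hg : invNum (π * g) = invNum π + 2) :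
    (bruhatIoo π (π * g)).ncard =
      {t | t.IsSwap ∧ (t * g).IsSwap ∧ invNum (π * t) = invNum π + 1}.ncard := by
  rw [bruhatIoo_eq_image hg, Set.ncard_image_of_injective _ (mul_right_injective π)]

theorem ncard_bruhatIoo_of_threeCycle {π : Perm (Fin n)} {u v w : Fin n} (huv : u ≠ v)
    (hvw : v ≠ w) (huw : u ≠ w) (h₁ : invNum (π * swap u v) = invNum π + 1)
    (h₂ : invNum (π * swap u v * swap v w) = invNum (π * swap u v) + 1) :
    (bruhatIoo π (π * swap u v * swap v w)).ncard = 2 := by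
  rw [mul_assoc, ncard_bruhatIoo (by rw [← mul_assoc]; omega)]
  simp_rw [← and_assoc, Perm.isSwap_and_isSwap_mul_swap_mul_swap_iff huv hvw huw]
  rcases invNum_mul_swap_eq_succ_or_of_chain huv hvw huw h₁ h₂ with h₃ | h₃
  · have h₄ := invNum_mul_swap_ne_succ huv hvw huw h₁ h₃
    refine Set.ncard_eq_two.mpr ⟨swap u v, swap v w, Perm.swap_ne_swap huv huw, Set.ext fun t => ?_⟩
    simp only [Set.mem_ofPred_eq, Set.mem_insert_iff, Set.mem_singleton_iff]
    grind
  · have h₄ := invNum_mul_swap_ne_succ huv.symm huw hvw (by rwa [swap_comm]) h₃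
    refine Set.ncard_eq_two.mpr ⟨swap u v, swap u w, ?_, Set.ext fun t => ?_⟩
    · rw [swap_comm u v]; exact Perm.swap_ne_swap huv.symm hvw
    simp only [Set.mem_ofPred_eq, Set.mem_insert_iff, Set.mem_singleton_iff]
    grind

theorem ncard_bruhatIoo_of_disjoint {π : Perm (Fin n)} {i j k l : Fin n}
    (hij : i ≠ j) (hkl : k ≠ l) (hik : i ≠ k) (hil : i ≠ l) (hjk : j ≠ k) (hjl : j ≠ l)
    (h₁ : invNum (π * swap i j) = invNum π + 1)
    (h₂ : invNum (π * swap i j * swap k l) = invNum (π * swap i j) + 1) :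
    (bruhatIoo π (π * swap i j * swap k l)).ncard = 2 := by
  rw [mul_assoc, ncard_bruhatIoo (by rw [← mul_assoc]; omega)]
  simp_rw [← and_assoc,
    Perm.isSwap_and_isSwap_mul_swap_mul_swap_iff_of_disjoint hij hkl hik hil hjk hjl]
  have h₃ := invNum_mul_swap_eq_succ_of_chain_of_disjoint hij hkl hik hil hjk hjl h₁ h₂
  have hne : swap i j ≠ swap k l := fun h => by
    simpa [swap_apply_of_ne_of_ne hik.symm hjk.symm, hkl] using congr($h k)
  refine Set.ncard_eq_two.mpr ⟨swap i j, swap k l, hne, Set.ext fun t => ?_⟩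
  simp only [Set.mem_ofPred_eq, Set.mem_insert_iff, Set.mem_singleton_iff]
  grind

end

/-- The Bruhat order on `S_n` is thin: every interval of length 2 is a diamond. -/
theorem bruhat_thin {n : ℕ} (π γ : Equiv.Perm (Fin n))
    (hlt : BruhatLt π γ) (hlen : invNum γ = invNum π + 2) :
    {z : Equiv.Perm (Fin n) | BruhatLt π z ∧ BruhatLt z γ}.ncard = 2 := by
  obtain ⟨_, ⟨⟨i, j, hij, rfl⟩, h₁⟩, ⟨⟨k, l, hkl, rfl⟩, h₂⟩⟩ :=
    hlt.exists_bruhatCov_bruhatCov hlen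
  change (bruhatIoo π _).ncard = 2
  by_cases hik : i = k
  · subst hik
    by_cases hjl : j = l
    · subst hjl; simp at hlen
    rw [swap_comm i j] at h₁ h₂ ⊢
    exact ncard_bruhatIoo_of_threeCycle hij.symm hkl hjl h₁ h₂
  by_cases hil : i = l
  · subst hil
    by_cases hjk : j = k
    · subst hjk; simp [swap_comm j i] at hlen
    rw [swap_comm i j] at h₁ h₂ ⊢
    rw [swap_comm k i] at h₂ ⊢
    exact ncard_bruhatIoo_of_threeCycle hij.symm hkl.symm hjk h₁ h₂
  by_cases hjk : j = k
  · subst hjk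
    exact ncard_bruhatIoo_of_threeCycle hij hkl hil h₁ h₂
  by_cases hjl : j = l
  · subst hjl
    rw [swap_comm k j] at h₂ ⊢
    exact ncard_bruhatIoo_of_threeCycle hij hkl.symm hik h₁ h₂
  exact ncard_bruhatIoo_of_disjoint hij hkl hik hil hjk hjl h₁ h₂
end
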